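/- arXiv:1408.4251 — 3 statements merged into one kernel-verified Lean document; each statement's English description precedes it below -/
import Mathlib

section
/- Let X be an ℕ-valued random variable on a probability space. Then for every t ∈ ℝ, |𝔼[e^{itX}] − 1 − (e^{it} − 1)·𝔼[X]| ≤ 2·𝔼[X(X − 1)], where both sides are interpreted in [0, ∞] and 𝔼[X] is assumed finite. -/
open MeasureTheory
open scoped ENNReal

lemma pow_sub_one_norm (z : ℂ) (hz : ‖z‖ = 1) (n : ℕ) :
    ‖z ^ n - 1‖ ≤ 2 * n := by
  induction n with
  | zero => simp
  | succ n ih =>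
    have h : z ^ (n+1) - 1 = z * (z ^ n - 1) + (z - 1) := by ring
    have hz1 : ‖z - 1‖ ≤ 2 := by
      calc ‖z - 1‖ ≤ ‖z‖ + ‖(1:ℂ)‖ := norm_sub_le _ _
      _ = 2 := by rw [hz]; norm_num
    rw [h]
    calc ‖z * (z ^ n - 1) + (z - 1)‖ ≤ ‖z * (z ^ n - 1)‖ + ‖z - 1‖ := norm_add_le _ _
    _ ≤ 2 * n + 2 := by
        rw [norm_mul, hz, one_mul]; linarith
    _ ≤ 2 * (n + 1 : ℕ) := by push_cast; linarith

lemma key_norm (z : ℂ) (hz : ‖z‖ = 1) (n : ℕ) :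
    ‖z ^ n - 1 - n * (z - 1)‖ ≤ 2 * (n * (n - 1) : ℕ) := by
  induction n with
  | zero => simp
  | succ n ih =>
    have h : z ^ (n+1) - 1 - (n+1 : ℕ) * (z - 1)
        = (z ^ n - 1 - n * (z - 1)) + (z - 1) * (z ^ n - 1) := by
      push_cast; ring
    have hz1 : ‖z - 1‖ ≤ 2 := by
      calc ‖z - 1‖ ≤ ‖z‖ + ‖(1:ℂ)‖ := norm_sub_le _ _
      _ = 2 := by rw [hz]; norm_num
    rw [h]
    calc ‖(z ^ n - 1 - n * (z - 1)) + (z - 1) * (z ^ n - 1)‖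
        ≤ ‖z ^ n - 1 - n * (z - 1)‖ + ‖(z - 1) * (z ^ n - 1)‖ := norm_add_le _ _
    _ ≤ 2 * (n * (n - 1) : ℕ) + 2 * (2 * n) := by
        have := pow_sub_one_norm z hz n
        have hm : ‖(z - 1) * (z ^ n - 1)‖ ≤ 2 * (2 * n) := by
          rw [norm_mul]
          have h0 : (0:ℝ) ≤ ‖z ^ n - 1‖ := norm_nonneg _
          nlinarith
        linarith
    _ ≤ 2 * ((n+1) * ((n+1) - 1) : ℕ) := by
        rcases n with _ | m
        · simp
        · push_cast; ring_nf; nlinarith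

/-- For an ℕ-valued random variable `X` with finite expectation,
`|𝔼[e^{itX}] − 1 − (e^{it} − 1) 𝔼[X]| ≤ 2 𝔼[X(X−1)]`, both sides in `[0,∞]`. -/
theorem charFun_remainder_bound {Ω : Type} [MeasurableSpace Ω]
    (P : Measure Ω) [IsProbabilityMeasure P]
    (X : Ω → ℕ) (hX : Measurable X)
    (hint : Integrable (fun ω => (X ω : ℝ)) P) (t : ℝ) :
    ENNReal.ofReal
        ‖(∫ ω, Complex.exp (Complex.I * t * (X ω : ℂ)) ∂P) - 1 -
          (Complex.exp (Complex.I * t) - 1) * ((∫ ω, (X ω : ℝ) ∂P : ℝ) : ℂ)‖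
      ≤ 2 * ∫⁻ ω, ((X ω * (X ω - 1) : ℕ) : ℝ≥0∞) ∂P := by
  set z := Complex.exp (Complex.I * t) with hzdef
  have hz : ‖z‖ = 1 := by
    simp [hzdef, Complex.norm_exp]
  have hpow : ∀ ω, Complex.exp (Complex.I * t * (X ω : ℂ)) = z ^ (X ω) := by
    intro ω
    rw [hzdef, ← Complex.exp_nat_mul]
    ring_nf
  -- integrability
  have h1 : Integrable (fun ω => z ^ (X ω)) P := by
    refine (integrable_const (1:ℝ)).mono' ?_ ?_
    · exact (measurable_const.pow hX).aestronglyMeasurable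
    · filter_upwards with ω
      simp [norm_pow, hz]
  have h2 : Integrable (fun ω => ((X ω : ℝ) : ℂ)) P := hint.ofReal
  have h3 : Integrable (fun ω => (z - 1) * ((X ω : ℝ) : ℂ)) P := h2.const_mul _
  -- rewrite LHS integral
  have hEX : ((∫ ω, (X ω : ℝ) ∂P : ℝ) : ℂ) = ∫ ω, ((X ω : ℝ) : ℂ) ∂P := by
    exact integral_ofReal.symm
  have hsplit : (∫ ω, Complex.exp (Complex.I * t * (X ω : ℂ)) ∂P) - 1 -
      (z - 1) * ((∫ ω, (X ω : ℝ) ∂P : ℝ) : ℂ)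
      = ∫ ω, (z ^ (X ω) - 1 - (z - 1) * ((X ω : ℝ) : ℂ)) ∂P := by
    have hA : Integrable (fun ω => z ^ X ω - 1) P := h1.sub (integrable_const 1)
    simp only [hpow]
    rw [integral_sub hA h3, integral_sub h1 (integrable_const 1), integral_const]
    rw [hEX, ← integral_const_mul]
    simp
  rw [hsplit, ofReal_norm]
  refine le_trans (enorm_integral_le_lintegral_enorm _) ?_
  calc ∫⁻ ω, (↑‖z ^ (X ω) - 1 - (z - 1) * ((X ω : ℝ) : ℂ)‖₊ : ℝ≥0∞) ∂P
      ≤ ∫⁻ ω, 2 * ((X ω * (X ω - 1) : ℕ) : ℝ≥0∞) ∂P := by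
        refine lintegral_mono fun ω => ?_
        have hb : ‖z ^ (X ω) - 1 - (z - 1) * ((X ω : ℝ) : ℂ)‖
            ≤ 2 * ((X ω * (X ω - 1) : ℕ) : ℝ) := by
          have := key_norm z hz (X ω)
          have he : (z - 1) * ((X ω : ℝ) : ℂ) = (X ω : ℂ) * (z - 1) := by
            push_cast; ring
          rw [he]
          exact this
        calc (↑‖z ^ (X ω) - 1 - (z - 1) * ((X ω : ℝ) : ℂ)‖₊ : ℝ≥0∞)
            = ENNReal.ofReal ‖z ^ (X ω) - 1 - (z - 1) * ((X ω : ℝ) : ℂ)‖ :=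
              (ofReal_norm _).symm
        _ ≤ ENNReal.ofReal (2 * ((X ω * (X ω - 1) : ℕ) : ℝ)) := ENNReal.ofReal_le_ofReal hb
        _ = 2 * ((X ω * (X ω - 1) : ℕ) : ℝ≥0∞) := by
            rw [ENNReal.ofReal_mul (by norm_num), ENNReal.ofReal_natCast,
              ENNReal.ofReal_ofNat]
  _ = 2 * ∫⁻ ω, ((X ω * (X ω - 1) : ℕ) : ℝ≥0∞) ∂P := by
      rw [lintegral_const_mul]
      exact measurable_from_nat.comp (hX.mul (hX.sub measurable_const))
end

section
/- Let μ be a finite Borel measure on ℝ and define S_μ(s) := sup_{a∈ℝ} μ([a, a+s]) for s > 0. Then for every E ∈ ℝ and every ε > 0, ∫_ℝ ε/((λ − E)² + ε²) dμ(λ) ≤ 2(1 + π²/6) · S_μ(ε)/ε. -/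
set_option maxHeartbeats 1000000

open MeasureTheory

private lemma pk_shift_summable : Summable (fun k : ℕ => 1 / (((k : ℝ) + 1) ^ 2)) := by
  have := hasSum_zeta_two.summable
  rw [← summable_nat_add_iff (f := fun n : ℕ => 1 / ((n : ℝ) ^ 2)) 1] at this
  convert this using 2 with k
  case e'_5 =>
    push_cast
    ring
  case e'_3 => rfl

private lemma pk_shift_sum : ∑' k : ℕ, 1 / (((k : ℝ) + 1) ^ 2) = Real.pi ^ 2 / 6 := by
  have h := hasSum_zeta_two.tsum_eq
  rw [Summable.tsum_eq_zero_add hasSum_zeta_two.summable] at h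
  simp only [Nat.cast_zero, Nat.cast_add, Nat.cast_one] at h
  simpa using h

private lemma pk_shift_summable' : Summable (fun k : ℕ => 1 / ((((k : ℕ) + 1 : ℕ) : ℝ) ^ 2 + 1)) := by
  refine Summable.of_nonneg_of_le (fun k => by positivity) ?_ pk_shift_summable
  intro k
  push_cast
  rw [div_le_div_iff₀ (by positivity) (by positivity)]
  nlinarith [sq_nonneg ((k : ℝ) + 1)]

private lemma pk_h_summable : Summable (fun k : ℕ => 1 / ((k : ℝ) ^ 2 + 1)) :=
  (summable_nat_add_iff (f := fun k : ℕ => 1 / ((k : ℝ) ^ 2 + 1)) 1).1 pk_shift_summable'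

private lemma pk_h_sum_le : ∑' k : ℕ, 1 / ((k : ℝ) ^ 2 + 1) ≤ 1 + Real.pi ^ 2 / 6 := by
  rw [Summable.tsum_eq_zero_add pk_h_summable]
  have h1 : ∑' k : ℕ, 1 / ((((k : ℕ) + 1 : ℕ) : ℝ) ^ 2 + 1) ≤ Real.pi ^ 2 / 6 := by
    rw [← pk_shift_sum]
    apply Summable.tsum_le_tsum _ pk_shift_summable' pk_shift_summable
    intro k
    push_cast
    rw [div_le_div_iff₀ (by positivity) (by positivity)]
    nlinarith [sq_nonneg ((k : ℝ) + 1)]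
  have h0 : 1 / (((0 : ℕ) : ℝ) ^ 2 + 1) = 1 := by norm_num
  linarith

private lemma pk_int_hasSum :
    HasSum (fun n : ℤ => 1 / (((if 0 ≤ n then (n : ℝ) else (n : ℝ) + 1)) ^ 2 + 1))
      ((∑' k : ℕ, 1 / ((k : ℝ) ^ 2 + 1)) + (∑' k : ℕ, 1 / ((k : ℝ) ^ 2 + 1))) := by
  have h := pk_h_summable.hasSum.int_rec pk_h_summable.hasSum
  convert h using 1
  funext n
  cases n with
  | ofNat k =>
      simp only [Int.ofNat_eq_coe]
      rw [if_pos (by positivity)]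
      norm_num
  | negSucc k =>
      rw [if_neg (by simp [Int.negSucc_not_nonneg])]
      show _ = 1 / ((k : ℝ) ^ 2 + 1)
      push_cast
      ring_nf

/-- For a finite Borel measure `μ` on ℝ with concentration function
`S_μ(s) = sup_a μ([a, a+s])`, the Poisson-kernel integral satisfies
`∫ ε/((x−E)² + ε²) dμ(x) ≤ 2 (1 + π²/6) S_μ(ε)/ε` for all `E ∈ ℝ`, `ε > 0`. -/
theorem poisson_kernel_integral_le_concentration (μ : Measure ℝ)
    [IsFiniteMeasure μ] (E ε : ℝ) (hε : 0 < ε) :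
    ∫ x, ε / ((x - E) ^ 2 + ε ^ 2) ∂μ
      ≤ 2 * (1 + Real.pi ^ 2 / 6) *
          (⨆ a : ℝ, (μ (Set.Icc a (a + ε))).toReal) / ε := by
  set S := ⨆ a : ℝ, (μ (Set.Icc a (a + ε))).toReal with hSdef
  set A := ∑' k : ℕ, 1 / ((k : ℝ) ^ 2 + 1) with hAdef
  have hA0 : 0 ≤ A := tsum_nonneg fun k => by positivity
  have hAle : A ≤ 1 + Real.pi ^ 2 / 6 := pk_h_sum_le
  have hbdd : BddAbove (Set.range fun a : ℝ => (μ (Set.Icc a (a + ε))).toReal) := by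
    refine ⟨(μ Set.univ).toReal, ?_⟩
    rintro _ ⟨a, rfl⟩
    exact ENNReal.toReal_mono (measure_ne_top μ _) (measure_mono (Set.subset_univ _))
  have hS0 : 0 ≤ S := Real.iSup_nonneg fun a => ENNReal.toReal_nonneg
  have hμS : ∀ a : ℝ, μ (Set.Icc a (a + ε)) ≤ ENNReal.ofReal S := by
    intro a
    rw [ENNReal.le_ofReal_iff_toReal_le (measure_ne_top μ _) hS0]
    exact le_ciSup hbdd a
  set g : ℤ → ℝ := fun n => if 0 ≤ n then (n : ℝ) else (n : ℝ) + 1 with hgdef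
  set I : ℤ → Set ℝ := fun n => Set.Ico (E + n * ε) (E + (n + 1) * ε) with hIdef
  have hcover : Set.univ ⊆ ⋃ n : ℤ, I n := by
    intro x _
    have h1 : (⌊(x - E) / ε⌋ : ℝ) * ε ≤ x - E :=
      (le_div_iff₀ hε).1 (Int.floor_le _)
    have h2 : x - E < ((⌊(x - E) / ε⌋ : ℝ) + 1) * ε :=
      (div_lt_iff₀ hε).1 (Int.lt_floor_add_one _)
    exact Set.mem_iUnion.2 ⟨⌊(x - E) / ε⌋, by constructor <;> [linarith; linarith]⟩
  have hcont : Continuous fun x : ℝ => ε / ((x - E) ^ 2 + ε ^ 2) :=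
    continuous_const.div (by continuity) fun x => by positivity
  have hpt : ∀ n : ℤ, ∀ x ∈ I n,
      ε / ((x - E) ^ 2 + ε ^ 2) ≤ 1 / ((g n) ^ 2 + 1) / ε := by
    intro n x hx
    obtain ⟨hx1, hx2⟩ := hx
    have hsq : (g n) ^ 2 * ε ^ 2 ≤ (x - E) ^ 2 := by
      by_cases hn : 0 ≤ n
      · simp only [hgdef, if_pos hn]
        have hn' : (0 : ℝ) ≤ (n : ℝ) := by exact_mod_cast hn
        nlinarith [hx1, mul_nonneg hn' hε.le]
      · simp only [hgdef, if_neg hn]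
        have hn' : (n : ℝ) + 1 ≤ 0 := by
          have : n + 1 ≤ 0 := by omega
          exact_mod_cast this
        nlinarith [hx2, mul_nonpos_of_nonpos_of_nonneg hn' hε.le]
    rw [div_div, div_le_div_iff₀ (by positivity) (by positivity)]
    nlinarith [hsq, sq_nonneg (g n)]
  have hnn : 0 ≤ᵐ[μ] fun x => ε / ((x - E) ^ 2 + ε ^ 2) :=
    ae_of_all _ fun x => by positivity
  rw [integral_eq_lintegral_of_nonneg_ae hnn hcont.aestronglyMeasurable]
  have hRHS0 : 0 ≤ 2 * (1 + Real.pi ^ 2 / 6) * S / ε :=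
    div_nonneg (mul_nonneg (by positivity) hS0) hε.le
  refine ENNReal.toReal_le_of_le_ofReal hRHS0 ?_
  set b : ℤ → ℝ := fun n => 1 / ((g n) ^ 2 + 1) / ε with hbdef
  have hbsum : HasSum b ((A + A) / ε) := by
    have h := pk_int_hasSum.div_const ε
    rw [← hAdef] at h
    exact h
  have hb : ∀ n : ℤ, ∫⁻ x in I n, ENNReal.ofReal (ε / ((x - E) ^ 2 + ε ^ 2)) ∂μ
      ≤ ENNReal.ofReal (b n) * ENNReal.ofReal S := by
    intro n
    have hIcc : I n ⊆ Set.Icc (E + n * ε) (E + n * ε + ε) := by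
      rw [hIdef]
      intro x hx
      exact ⟨hx.1, by nlinarith [hx.2]⟩
    calc ∫⁻ x in I n, ENNReal.ofReal (ε / ((x - E) ^ 2 + ε ^ 2)) ∂μ
        ≤ ∫⁻ _ in I n, ENNReal.ofReal (b n) ∂μ :=
          setLIntegral_mono measurable_const fun x hx =>
            ENNReal.ofReal_le_ofReal (hpt n x hx)
      _ = ENNReal.ofReal (b n) * μ (I n) := setLIntegral_const _ _
      _ ≤ ENNReal.ofReal (b n) * ENNReal.ofReal S := by
          gcongr
          exact le_trans (measure_mono hIcc) (hμS _)
  calc ∫⁻ x, ENNReal.ofReal (ε / ((x - E) ^ 2 + ε ^ 2)) ∂μ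
      = ∫⁻ x in ⋃ n : ℤ, I n, ENNReal.ofReal (ε / ((x - E) ^ 2 + ε ^ 2)) ∂μ := by
        rw [Set.eq_univ_of_univ_subset hcover, setLIntegral_univ]
    _ ≤ ∑' n : ℤ, ∫⁻ x in I n, ENNReal.ofReal (ε / ((x - E) ^ 2 + ε ^ 2)) ∂μ :=
        lintegral_iUnion_le _ _
    _ ≤ ∑' n : ℤ, ENNReal.ofReal (b n) * ENNReal.ofReal S :=
        ENNReal.tsum_le_tsum hb
    _ = (∑' n : ℤ, ENNReal.ofReal (b n)) * ENNReal.ofReal S :=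
        ENNReal.tsum_mul_right
    _ = ENNReal.ofReal ((A + A) / ε) * ENNReal.ofReal S := by
        rw [← ENNReal.ofReal_tsum_of_nonneg (fun n => by positivity) hbsum.summable,
          hbsum.tsum_eq]
    _ = ENNReal.ofReal ((A + A) / ε * S) :=
        (ENNReal.ofReal_mul (by positivity)).symm
    _ ≤ ENNReal.ofReal (2 * (1 + Real.pi ^ 2 / 6) * S / ε) := by
        apply ENNReal.ofReal_le_ofReal
        rw [div_mul_eq_mul_div]
        gcongr
        linarith
end

section
/- Let μ be a finite Borel measure on ℝ and U > 0, 0 < α ≤ 1 be such that μ([a, a+s]) ≤ U s^α for all a ∈ ℝ and s > 0. Let d ≥ 1 be an integer, set β_L := (2L+1)^{d/α} for L ∈ ℕ, fix E ∈ ℝ and v > 0, and set ε_L := v/β_L. Then for every L ∈ ℕ, β_L^{−1} · ∫_ℝ ε_L/((λ − E)² + ε_L²) dμ(λ) ≤ 2(1 + π²/6) · U · v^{α−1} · (2L+1)^{−d}. -/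
open MeasureTheory

open Real in
private lemma poisson_holder_aux (μ : Measure ℝ) [IsFiniteMeasure μ]
    (U : ℝ) (hU : 0 < U) (α : ℝ) (hα0 : 0 < α) (hα1 : α ≤ 1)
    (hμ : ∀ a s : ℝ, 0 < s → (μ (Set.Icc a (a + s))).toReal ≤ U * s ^ α)
    (E ε : ℝ) (hε : 0 < ε) :
    ∫ x, ε / ((x - E) ^ 2 + ε ^ 2) ∂μ ≤ 2 * (1 + Real.pi ^ 2 / 6) * U * ε ^ (α - 1) := by
  set K : ℝ := 2 * U * ε ^ (α - 1) with hK
  have hKpos : 0 < K := by positivity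
  set b : ℕ → ℝ := fun n => if n = 0 then 1 else 1 / (n : ℝ) ^ 2 with hb
  have hb0 : ∀ n, 0 ≤ b n := by
    intro n; simp only [hb]; split <;> positivity
  have hbsum : HasSum b (1 + π ^ 2 / 6) := by
    have h1 : HasSum (fun n : ℕ => (1 : ℝ) / (n : ℝ) ^ 2 + if n = 0 then 1 else 0)
        (π ^ 2 / 6 + 1) := hasSum_zeta_two.add (hasSum_ite_eq 0 1)
    have : b = fun n : ℕ => (1 : ℝ) / (n : ℝ) ^ 2 + if n = 0 then 1 else 0 := by
      funext n
      rcases Nat.eq_zero_or_pos n with rfl | hn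
      · simp [hb]
      · simp [hb, hn.ne']
    rw [this, add_comm (1 : ℝ)]
    exact h1
  set A : ℕ → Set ℝ := fun n =>
    {x | (n : ℝ) * ε ≤ |x - E|} ∩ {x | |x - E| < ((n : ℝ) + 1) * ε} with hA
  have habs : Measurable fun x : ℝ => |x - E| := (measurable_id.sub_const E).abs
  have hmeasA : ∀ n, MeasurableSet (A n) := fun n =>
    (measurableSet_le measurable_const habs).inter (measurableSet_lt habs measurable_const)
  have hcover : ⋃ n, A n = Set.univ := by
    ext x
    simp only [Set.mem_iUnion, Set.mem_univ, iff_true, hA, Set.mem_inter_iff, Set.mem_setOf_eq]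
    have ht : 0 ≤ |x - E| := abs_nonneg _
    refine ⟨⌊|x - E| / ε⌋₊, ?_, ?_⟩
    · exact (le_div_iff₀ hε).mp (Nat.floor_le (div_nonneg ht hε.le))
    · exact (div_lt_iff₀ hε).mp (Nat.lt_floor_add_one _)
  have hdisj : Pairwise (Function.onFun Disjoint A) := by
    have key : ∀ m n : ℕ, m < n → Disjoint (A m) (A n) := by
      intro m n h
      refine Set.disjoint_left.mpr fun x hxm hxn => ?_
      have h1 : |x - E| < ((m : ℝ) + 1) * ε := hxm.2
      have h2 : (n : ℝ) * ε ≤ |x - E| := hxn.1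
      have h3 : ((m : ℝ) + 1) ≤ (n : ℝ) := by exact_mod_cast h
      nlinarith
    intro m n hmn
    rcases lt_or_gt_of_ne hmn with h | h
    · exact key m n h
    · exact (key n m h).symm
  have hIcc : ∀ a : ℝ, ∀ s : ℝ, 0 < s →
      μ (Set.Icc a (a + s)) ≤ ENNReal.ofReal (U * s ^ α) := by
    intro a s hs
    rw [← ENNReal.ofReal_toReal (measure_ne_top μ _)]
    exact ENNReal.ofReal_le_ofReal (hμ a s hs)
  have hmeasbd : ∀ n, μ (A n) ≤ ENNReal.ofReal (2 * U * ε ^ α) := by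
    intro n
    cases n with
    | zero =>
      have hsub : A 0 ⊆ Set.Icc (E - ε) ((E - ε) + 2 * ε) := by
        intro x hx
        have h2 := hx.2
        simp only [Set.mem_setOf_eq, Nat.cast_zero, zero_add, one_mul] at h2
        rw [abs_lt] at h2
        constructor <;> [linarith [h2.1]; linarith [h2.2]]
      calc μ (A 0) ≤ μ (Set.Icc (E - ε) ((E - ε) + 2 * ε)) := measure_mono hsub
        _ ≤ ENNReal.ofReal (U * (2 * ε) ^ α) := hIcc _ _ (by positivity)
        _ ≤ ENNReal.ofReal (2 * U * ε ^ α) := by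
            refine ENNReal.ofReal_le_ofReal ?_
            have h2 : (2 * ε) ^ α = 2 ^ α * ε ^ α := Real.mul_rpow (by norm_num) hε.le
            have h3 : (2 : ℝ) ^ α ≤ 2 := by
              calc (2 : ℝ) ^ α ≤ 2 ^ (1 : ℝ) :=
                    Real.rpow_le_rpow_of_exponent_le one_le_two hα1
                _ = 2 := Real.rpow_one 2
            have h4 : (0 : ℝ) ≤ ε ^ α := Real.rpow_nonneg hε.le α
            rw [h2]
            have h5 : U * (2 ^ α * ε ^ α) ≤ U * (2 * ε ^ α) :=
              mul_le_mul_of_nonneg_left (mul_le_mul_of_nonneg_right h3 h4) hU.le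
            linarith
    | succ n =>
      have hsub : A (n + 1) ⊆ Set.Icc (E + ((n : ℝ) + 1) * ε) ((E + ((n : ℝ) + 1) * ε) + ε) ∪
          Set.Icc (E - ((n : ℝ) + 2) * ε) ((E - ((n : ℝ) + 2) * ε) + ε) := by
        intro x hx
        have h1 : ((n : ℝ) + 1) * ε ≤ |x - E| := by
          have := hx.1; simp only [Set.mem_setOf_eq] at this; push_cast at this; linarith
        have h2 : |x - E| < ((n : ℝ) + 2) * ε := by
          have := hx.2; simp only [Set.mem_setOf_eq] at this; push_cast at this; linarith
        rcases abs_cases (x - E) with ⟨heq, _⟩ | ⟨heq, _⟩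
        · left
          rw [heq] at h1 h2
          constructor <;> [linarith; linarith]
        · right
          rw [heq] at h1 h2
          constructor <;> [linarith; linarith]
      calc μ (A (n + 1)) ≤ μ (Set.Icc (E + ((n : ℝ) + 1) * ε) ((E + ((n : ℝ) + 1) * ε) + ε) ∪
              Set.Icc (E - ((n : ℝ) + 2) * ε) ((E - ((n : ℝ) + 2) * ε) + ε)) := measure_mono hsub
        _ ≤ μ (Set.Icc (E + ((n : ℝ) + 1) * ε) ((E + ((n : ℝ) + 1) * ε) + ε)) +
              μ (Set.Icc (E - ((n : ℝ) + 2) * ε) ((E - ((n : ℝ) + 2) * ε) + ε)) :=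
            measure_union_le _ _
        _ ≤ ENNReal.ofReal (U * ε ^ α) + ENNReal.ofReal (U * ε ^ α) :=
            add_le_add (hIcc _ _ hε) (hIcc _ _ hε)
        _ = ENNReal.ofReal (2 * U * ε ^ α) := by
            rw [← ENNReal.ofReal_add (by positivity) (by positivity)]
            ring_nf
  have hpt : ∀ n, ∀ x ∈ A n, ε / ((x - E) ^ 2 + ε ^ 2) ≤ b n / ε := by
    intro n x hx
    have hden : 0 < (x - E) ^ 2 + ε ^ 2 := by positivity
    cases n with
    | zero =>
      have hle : ε ^ 2 ≤ (x - E) ^ 2 + ε ^ 2 := by nlinarith [sq_nonneg (x - E)]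
      have : ε / ((x - E) ^ 2 + ε ^ 2) ≤ ε / ε ^ 2 :=
        div_le_div_of_nonneg_left hε.le (by positivity) hle
      refine this.trans (le_of_eq ?_)
      simp only [hb]
      field_simp
      simp
    | succ n =>
      have h1 : ((n : ℝ) + 1) * ε ≤ |x - E| := by
        have := hx.1; simp only [Set.mem_setOf_eq] at this; push_cast at this; linarith
      have h2 : (((n : ℝ) + 1) * ε) ^ 2 ≤ (x - E) ^ 2 := by
        rw [← sq_abs (x - E)]
        have hnn : 0 ≤ ((n : ℝ) + 1) * ε := by positivity
        nlinarith [abs_nonneg (x - E)]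
      have hle : (((n : ℝ) + 1) * ε) ^ 2 ≤ (x - E) ^ 2 + ε ^ 2 := by nlinarith [sq_nonneg ε]
      have : ε / ((x - E) ^ 2 + ε ^ 2) ≤ ε / (((n : ℝ) + 1) * ε) ^ 2 :=
        div_le_div_of_nonneg_left hε.le (by positivity) hle
      refine this.trans (le_of_eq ?_)
      simp only [hb, Nat.succ_ne_zero, if_false]
      push_cast
      field_simp
  set f : ℝ → ℝ := fun x => ε / ((x - E) ^ 2 + ε ^ 2) with hf
  have hf_nonneg : ∀ x, 0 ≤ f x := fun x => by positivity
  have hf_meas : Measurable f :=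
    measurable_const.div (((measurable_id.sub_const E).pow_const 2).add_const _)
  have hrepr : ∫ x, f x ∂μ = (∫⁻ x, ENNReal.ofReal (f x) ∂μ).toReal :=
    integral_eq_lintegral_of_nonneg_ae (Filter.Eventually.of_forall hf_nonneg)
      hf_meas.aestronglyMeasurable
  rw [show (∫ x, ε / ((x - E) ^ 2 + ε ^ 2) ∂μ) = ∫ x, f x ∂μ from rfl, hrepr]
  have hRHS : (0 : ℝ) ≤ 2 * (1 + π ^ 2 / 6) * U * ε ^ (α - 1) := by positivity
  refine ENNReal.toReal_le_of_le_ofReal hRHS ?_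
  have hterm : ∀ n, ∫⁻ x in A n, ENNReal.ofReal (f x) ∂μ ≤ ENNReal.ofReal (K * b n) := by
    intro n
    calc ∫⁻ x in A n, ENNReal.ofReal (f x) ∂μ
        ≤ ∫⁻ _ in A n, ENNReal.ofReal (b n / ε) ∂μ :=
          setLIntegral_mono measurable_const fun x hx =>
            ENNReal.ofReal_le_ofReal (hpt n x hx)
      _ = ENNReal.ofReal (b n / ε) * μ (A n) := setLIntegral_const _ _
      _ ≤ ENNReal.ofReal (b n / ε) * ENNReal.ofReal (2 * U * ε ^ α) :=
          mul_le_mul_right (hmeasbd n) _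
      _ = ENNReal.ofReal (b n / ε * (2 * U * ε ^ α)) :=
          (ENNReal.ofReal_mul (div_nonneg (hb0 n) hε.le)).symm
      _ = ENNReal.ofReal (K * b n) := by
          congr 1
          rw [hK, Real.rpow_sub hε, Real.rpow_one]
          field_simp
  calc ∫⁻ x, ENNReal.ofReal (f x) ∂μ
      = ∫⁻ x in ⋃ n, A n, ENNReal.ofReal (f x) ∂μ := by rw [hcover, setLIntegral_univ]
    _ = ∑' n, ∫⁻ x in A n, ENNReal.ofReal (f x) ∂μ := lintegral_iUnion hmeasA hdisj _
    _ ≤ ∑' n, ENNReal.ofReal (K * b n) := ENNReal.tsum_le_tsum hterm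
    _ = ENNReal.ofReal (∑' n, K * b n) :=
        (ENNReal.ofReal_tsum_of_nonneg (fun n => mul_nonneg hKpos.le (hb0 n))
          (hbsum.summable.mul_left K)).symm
    _ ≤ ENNReal.ofReal (2 * (1 + π ^ 2 / 6) * U * ε ^ (α - 1)) := by
        refine ENNReal.ofReal_le_ofReal (le_of_eq ?_)
        rw [tsum_mul_left, hbsum.tsum_eq, hK]
        ring

/-- If `μ` is uniformly α-Hölder continuous with constant `U`
(`μ([a, a+s]) ≤ U s^α`), then with `β_L = (2L+1)^{d/α}` and `ε_L = v/β_L`,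
`β_L⁻¹ ∫ ε_L/((x−E)² + ε_L²) dμ(x) ≤ 2 (1 + π²/6) U v^{α−1} (2L+1)^{−d}`. -/
theorem scaled_poisson_kernel_integral_bound (μ : Measure ℝ) [IsFiniteMeasure μ]
    (U : ℝ) (hU : 0 < U) (α : ℝ) (hα0 : 0 < α) (hα1 : α ≤ 1)
    (hμ : ∀ a s : ℝ, 0 < s → (μ (Set.Icc a (a + s))).toReal ≤ U * s ^ α)
    (d : ℕ) (hd : 1 ≤ d) (E v : ℝ) (hv : 0 < v) (L : ℕ) :
    ((2 * (L : ℝ) + 1) ^ ((d : ℝ) / α))⁻¹ *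
        ∫ x, (v / (2 * (L : ℝ) + 1) ^ ((d : ℝ) / α)) /
          ((x - E) ^ 2 + (v / (2 * (L : ℝ) + 1) ^ ((d : ℝ) / α)) ^ 2) ∂μ
      ≤ 2 * (1 + Real.pi ^ 2 / 6) * U * v ^ (α - 1) *
          ((2 * (L : ℝ) + 1) ^ d)⁻¹ := by
  have hbase : (0 : ℝ) < 2 * (L : ℝ) + 1 := by positivity
  set β : ℝ := (2 * (L : ℝ) + 1) ^ ((d : ℝ) / α) with hβ
  have hβpos : 0 < β := Real.rpow_pos_of_pos hbase _
  have hεpos : 0 < v / β := div_pos hv hβpos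
  have h1 := poisson_holder_aux μ U hU α hα0 hα1 hμ E (v / β) hεpos
  have h2 : β⁻¹ * ∫ x, (v / β) / ((x - E) ^ 2 + (v / β) ^ 2) ∂μ
      ≤ β⁻¹ * (2 * (1 + Real.pi ^ 2 / 6) * U * (v / β) ^ (α - 1)) :=
    mul_le_mul_of_nonneg_left h1 (inv_nonneg.mpr hβpos.le)
  refine h2.trans (le_of_eq ?_)
  have hβα : β ^ α = (2 * (L : ℝ) + 1) ^ (d : ℕ) := by
    rw [hβ, ← Real.rpow_natCast (2 * (L : ℝ) + 1) d, ← Real.rpow_mul hbase.le,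
      div_mul_cancel₀ _ (ne_of_gt hα0)]
  have hdiv : (v / β) ^ (α - 1) = v ^ (α - 1) / β ^ (α - 1) :=
    Real.div_rpow hv.le hβpos.le _
  have hβcomb : β⁻¹ / β ^ (α - 1) = (β ^ α)⁻¹ := by
    rw [← Real.rpow_neg_one β, ← Real.rpow_neg hβpos.le α, div_eq_mul_inv,
      ← Real.rpow_neg hβpos.le (α - 1), ← Real.rpow_add hβpos]
    ring_nf
  rw [hdiv]
  rw [show β⁻¹ * (2 * (1 + Real.pi ^ 2 / 6) * U * (v ^ (α - 1) / β ^ (α - 1)))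
      = 2 * (1 + Real.pi ^ 2 / 6) * U * v ^ (α - 1) * (β⁻¹ / β ^ (α - 1)) by ring]
  rw [hβcomb, hβα]
end
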